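/- A nonzero complex number t that is not an eigenvalue of B is an eigenvalue of B^c if and only if −t² is an eigenvalue of Y(t)X, where Y(t) = (B − tI)⁻¹. -/

import Mathlib

open Matrix

/-- The non-backtracking matrix of a graph, indexed by oriented edges (darts):
`B_{k→l, i→j} = δ_{jk} (1 - δ_{il})`. -/
def nbMatrix {V : Type*} [Fintype V] [DecidableEq V] (G : SimpleGraph V)
    [DecidableRel G.Adj] : Matrix G.Dart G.Dart ℂ :=
  fun e f => if f.toProd.2 = e.toProd.1 ∧ e.toProd.2 ≠ f.toProd.1 then 1 else 0

/-- The orientation reversal operator `P`, with `(P v)_{k→l} = v_{l→k}`. -/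
def revOp {V : Type*} [Fintype V] [DecidableEq V] (G : SimpleGraph V)
    [DecidableRel G.Adj] : Matrix G.Dart G.Dart ℂ :=
  fun e f => if f = e.symm then 1 else 0


/-- The graph `G^c` obtained from `G` by adding a new node `c` (the vertex `none`)
joined to exactly the vertices in `S`. -/
def addNode {V : Type*} (G : SimpleGraph V) (S : Finset V) : SimpleGraph (Option V) where
  Adj x y :=
    match x, y with
    | some a, some b => G.Adj a b
    | some a, none => a ∈ S
    | none, some b => b ∈ S
    | none, none => False
  symm := by
    constructor
    intro x y h
    match x, y with
    | some a, some b => exact G.symm.symm _ _ h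
    | some a, none => exact h
    | none, some b => exact h
  loopless := by
    constructor
    intro x h
    match x with
    | some a => exact G.loopless.irrefl a h
    | none => exact h

instance {V : Type*} [DecidableEq V] (G : SimpleGraph V) [DecidableRel G.Adj] (S : Finset V) :
    DecidableRel (addNode G S).Adj := fun x y =>
  match x, y with
  | some a, some b => inferInstanceAs (Decidable (G.Adj a b))
  | some a, none => inferInstanceAs (Decidable (a ∈ S))
  | none, some b => inferInstanceAs (Decidable (b ∈ S))
  | none, none => inferInstanceAs (Decidable False)

variable {V : Type*} [Fintype V] [DecidableEq V]

/-- A dart of `G^c` is *new* if it is incident to the added node `c = none`. -/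
def isNewDart {V : Type*} (G : SimpleGraph V) (S : Finset V)
    (e : (addNode G S).Dart) : Prop :=
  e.toProd.1 = none ∨ e.toProd.2 = none

instance {V : Type*} [DecidableEq V] (G : SimpleGraph V) (S : Finset V) :
    DecidablePred (isNewDart G S) := fun e =>
  inferInstanceAs (Decidable (_ ∨ _))

/-- The NB matrix of `G^c`. -/
def Bc (G : SimpleGraph V) [DecidableRel G.Adj] (S : Finset V) :
    Matrix (addNode G S).Dart (addNode G S).Dart ℂ := nbMatrix (addNode G S)

/-- The block `D` of `B^c` (rows: old edges, columns: new edges), zero-padded to full size. -/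
def Dblk (G : SimpleGraph V) [DecidableRel G.Adj] (S : Finset V) :
    Matrix (addNode G S).Dart (addNode G S).Dart ℂ :=
  fun e f => if ¬ isNewDart G S e ∧ isNewDart G S f then Bc G S e f else 0

/-- The block `E` of `B^c` (rows: new edges, columns: old edges), zero-padded to full size. -/
def Eblk (G : SimpleGraph V) [DecidableRel G.Adj] (S : Finset V) :
    Matrix (addNode G S).Dart (addNode G S).Dart ℂ :=
  fun e f => if isNewDart G S e ∧ ¬ isNewDart G S f then Bc G S e f else 0

/-- The block `F` of `B^c` (rows and columns: new edges), zero-padded to full size. -/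
def Fblk (G : SimpleGraph V) [DecidableRel G.Adj] (S : Finset V) :
    Matrix (addNode G S).Dart (addNode G S).Dart ℂ :=
  fun e f => if isNewDart G S e ∧ isNewDart G S f then Bc G S e f else 0

/-- The matrix `X = D F E`. -/
noncomputable def Xmat (G : SimpleGraph V) [DecidableRel G.Adj] (S : Finset V) :
    Matrix (addNode G S).Dart (addNode G S).Dart ℂ :=
  Dblk G S * Fblk G S * Eblk G S

/-- The type of old darts of `G^c`, i.e. the darts of `G`. -/
def OldDart (G : SimpleGraph V) (S : Finset V) : Type _ :=
  {e : (addNode G S).Dart // ¬ isNewDart G S e}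

instance (G : SimpleGraph V) [DecidableRel G.Adj] (S : Finset V) : Fintype (OldDart G S) :=
  inferInstanceAs (Fintype {e : (addNode G S).Dart // ¬ isNewDart G S e})

instance (G : SimpleGraph V) (S : Finset V) : DecidableEq (OldDart G S) :=
  inferInstanceAs (DecidableEq {e : (addNode G S).Dart // ¬ isNewDart G S e})

/-- The NB matrix `B` of the original graph `G`, realized as the old-edge block of `B^c`. -/
def Bold (G : SimpleGraph V) [DecidableRel G.Adj] (S : Finset V) :
    Matrix (OldDart G S) (OldDart G S) ℂ :=
  fun e f => Bc G S e.1 f.1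

/-- The matrix `X = D F E` restricted to its (only nonzero) old-edge block. -/
noncomputable def Xsub (G : SimpleGraph V) [DecidableRel G.Adj] (S : Finset V) :
    Matrix (OldDart G S) (OldDart G S) ℂ :=
  fun e f => Xmat G S e.1 f.1

section Aux

variable {G : SimpleGraph V} [DecidableRel G.Adj] {S : Finset V}

/-- Padding an old-dart vector by zero on new darts. -/
noncomputable def pad (G : SimpleGraph V) [DecidableRel G.Adj] (S : Finset V)
    (w : OldDart G S → ℂ) : (addNode G S).Dart → ℂ :=
  fun e => if h : isNewDart G S e then 0 else w ⟨e, h⟩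

/-- The old-old block of `B^c`, zero-padded to full size. -/
def Ablk (G : SimpleGraph V) [DecidableRel G.Adj] (S : Finset V) :
    Matrix (addNode G S).Dart (addNode G S).Dart ℂ :=
  fun e f => if ¬ isNewDart G S e ∧ ¬ isNewDart G S f then Bc G S e f else 0

lemma not_both_none (e : (addNode G S).Dart) :
    ¬ (e.toProd.1 = none ∧ e.toProd.2 = none) := by
  rintro ⟨h1, h2⟩
  have h := e.adj
  rw [h1, h2] at h
  exact h

lemma old_fst_ne {e : (addNode G S).Dart} (h : ¬ isNewDart G S e) :
    e.toProd.1 ≠ none := fun hc => h (Or.inl hc)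

lemma old_snd_ne {e : (addNode G S).Dart} (h : ¬ isNewDart G S e) :
    e.toProd.2 ≠ none := fun hc => h (Or.inr hc)

lemma mulVec_apply' {n : Type*} [Fintype n] (M : Matrix n n ℂ) (v : n → ℂ) (e : n) :
    (M *ᵥ v) e = ∑ f, M e f * v f := rfl

lemma mulVec_congr' {n : Type*} [Fintype n] (M : Matrix n n ℂ) (v v' : n → ℂ)
    (h : ∀ e f, M e f * v f = M e f * v' f) : M *ᵥ v = M *ᵥ v' := by
  funext e
  rw [mulVec_apply', mulVec_apply']
  exact Finset.sum_congr rfl (fun f _ => h e f)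

lemma mulVec_row_zero {n : Type*} [Fintype n] (M : Matrix n n ℂ) (v : n → ℂ) (e : n)
    (h : ∀ f, M e f = 0) : (M *ᵥ v) e = 0 := by
  rw [mulVec_apply']
  exact Finset.sum_eq_zero (fun f _ => by rw [h f, zero_mul])

lemma Dblk_row {e f : (addNode G S).Dart} (h : isNewDart G S e) : Dblk G S e f = 0 := by
  simp [Dblk, h]

lemma Dblk_col {e f : (addNode G S).Dart} (h : f.toProd.1 ≠ none) : Dblk G S e f = 0 := by
  unfold Dblk
  split_ifs with hc
  · obtain ⟨he, hf⟩ := hc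
    have hf2 : f.toProd.2 = none := hf.resolve_left h
    have hne : f.toProd.2 ≠ e.toProd.1 := by
      rw [hf2]; exact fun hc => (old_fst_ne he) hc.symm
    simp [Bc, nbMatrix, hne]
  · rfl

lemma Eblk_row {e f : (addNode G S).Dart} (h : e.toProd.2 ≠ none) : Eblk G S e f = 0 := by
  unfold Eblk
  split_ifs with hc
  · obtain ⟨he, hf⟩ := hc
    have he1 : e.toProd.1 = none := he.resolve_right h
    have hne : f.toProd.2 ≠ e.toProd.1 := by
      rw [he1]; exact old_snd_ne hf
    simp [Bc, nbMatrix, hne]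
  · rfl

lemma Eblk_col {e f : (addNode G S).Dart} (h : isNewDart G S f) : Eblk G S e f = 0 := by
  simp [Eblk, h]

lemma Fblk_row {e f : (addNode G S).Dart} (h : e.toProd.1 ≠ none) : Fblk G S e f = 0 := by
  unfold Fblk
  split_ifs with hc
  · obtain ⟨he, hf⟩ := hc
    have he2 : e.toProd.2 = none := he.resolve_left h
    by_cases hcond : f.toProd.2 = e.toProd.1
    · have hf2 : f.toProd.2 ≠ none := by rw [hcond]; exact h
      have hf1 : f.toProd.1 = none := hf.resolve_right hf2
      have hne : ¬ e.toProd.2 ≠ f.toProd.1 := by rw [he2, hf1]; simp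
      simp [Bc, nbMatrix, hne]
    · simp [Bc, nbMatrix, hcond]
  · rfl

lemma Fblk_col {e f : (addNode G S).Dart} (h : f.toProd.2 ≠ none) : Fblk G S e f = 0 := by
  unfold Fblk
  split_ifs with hc
  · obtain ⟨he, hf⟩ := hc
    have hf1 : f.toProd.1 = none := hf.resolve_right h
    by_cases hcond : f.toProd.2 = e.toProd.1
    · have he1 : e.toProd.1 ≠ none := by rw [← hcond]; exact h
      have he2 : e.toProd.2 = none := he.resolve_left he1
      have hne : ¬ e.toProd.2 ≠ f.toProd.1 := by rw [he2, hf1]; simp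
      simp [Bc, nbMatrix, hne]
    · simp [Bc, nbMatrix, hcond]
  · rfl

lemma Ablk_row {e f : (addNode G S).Dart} (h : isNewDart G S e) : Ablk G S e f = 0 := by
  simp [Ablk, h]

lemma Ablk_col {e f : (addNode G S).Dart} (h : isNewDart G S f) : Ablk G S e f = 0 := by
  simp [Ablk, h]

lemma Bc_decomp : Bc G S = Ablk G S + Dblk G S + Eblk G S + Fblk G S := by
  funext e f
  by_cases he : isNewDart G S e <;> by_cases hf : isNewDart G S f <;>
    simp [Ablk, Dblk, Eblk, Fblk, he, hf]

lemma pad_old (w : OldDart G S → ℂ) (e : OldDart G S) : pad G S w e.1 = w e := by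
  simp only [pad, dif_neg e.2]
  rfl

lemma pad_new (w : OldDart G S → ℂ) {e : (addNode G S).Dart} (h : isNewDart G S e) :
    pad G S w e = 0 := by
  simp only [pad, dif_pos h]

lemma mulVec_pad (M : Matrix (addNode G S).Dart (addNode G S).Dart ℂ)
    (w : OldDart G S → ℂ) (e : (addNode G S).Dart) :
    (M *ᵥ pad G S w) e = ∑ f : OldDart G S, M e f.1 * w f := by
  rw [mulVec_apply',
    ← Finset.sum_filter_add_sum_filter_not Finset.univ (fun f => ¬ isNewDart G S f)]
  have h2 : ∑ f ∈ Finset.univ.filter (fun f => ¬ ¬ isNewDart G S f),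
      M e f * pad G S w f = 0 :=
    Finset.sum_eq_zero (fun f hf => by
      rw [pad_new w (not_not.mp (Finset.mem_filter.mp hf).2), mul_zero])
  rw [h2, add_zero]
  have h3 : ∑ f ∈ Finset.univ.filter (fun f => ¬ isNewDart G S f), M e f * pad G S w f
      = ∑ f : OldDart G S, M e f.1 * pad G S w f.1 :=
    Finset.sum_subtype _ (by simp) (fun f => M e f * pad G S w f)
  rw [h3]
  exact Finset.sum_congr rfl (fun f _ => by rw [pad_old])

lemma mulVec_pad_A (w : OldDart G S → ℂ) (e : OldDart G S) :
    (Ablk G S *ᵥ pad G S w) e.1 = (Bold G S *ᵥ w) e := by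
  rw [mulVec_pad, mulVec_apply']
  exact Finset.sum_congr rfl (fun f _ => by simp [Ablk, Bold, e.2, f.2])

lemma mulVec_pad_X (w : OldDart G S → ℂ) (e : OldDart G S) :
    (Xmat G S *ᵥ pad G S w) e.1 = (Xsub G S *ᵥ w) e := by
  rw [mulVec_pad, mulVec_apply']
  exact Finset.sum_congr rfl (fun f _ => rfl)

lemma Xmat_mulVec (u : (addNode G S).Dart → ℂ) :
    Xmat G S *ᵥ u = Dblk G S *ᵥ (Fblk G S *ᵥ (Eblk G S *ᵥ u)) := by
  rw [Matrix.mulVec_mulVec, Matrix.mulVec_mulVec, Xmat, Matrix.mul_assoc]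

/-- Spectrum membership as existence of an eigenvector. -/
lemma spec_iff_exists {n : Type*} [Fintype n] [DecidableEq n] (M : Matrix n n ℂ) (μ : ℂ) :
    μ ∈ spectrum ℂ M ↔ ∃ v ≠ 0, M *ᵥ v = μ • v := by
  rw [spectrum.mem_iff, Matrix.isUnit_iff_isUnit_det, isUnit_iff_ne_zero, not_not,
    ← Matrix.exists_mulVec_eq_zero_iff]
  have halg : (algebraMap ℂ (Matrix n n ℂ)) μ = μ • (1 : Matrix n n ℂ) :=
    Algebra.algebraMap_eq_smul_one μ
  constructor <;> rintro ⟨v, hv, h⟩ <;> refine ⟨v, hv, ?_⟩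
  · rw [halg, Matrix.sub_mulVec, Matrix.smul_mulVec, Matrix.one_mulVec,
      sub_eq_zero] at h
    exact h.symm
  · rw [halg, Matrix.sub_mulVec, Matrix.smul_mulVec, Matrix.one_mulVec, h, sub_self]

/-- Forward direction of the key equivalence. -/
lemma key_forward {t : ℂ} (ht : t ≠ 0) (v : (addNode G S).Dart → ℂ) (hv : v ≠ 0)
    (heig : Bc G S *ᵥ v = t • v) :
    ∃ w ≠ 0, Xsub G S *ᵥ w = (-t ^ 2) • ((Bold G S - t • 1) *ᵥ w) := by
  classical
  set w : OldDart G S → ℂ := fun e => v e.1 with hwdef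
  have hpt : ∀ e, (Ablk G S *ᵥ v) e + (Dblk G S *ᵥ v) e + (Eblk G S *ᵥ v) e
      + (Fblk G S *ᵥ v) e = t * v e := by
    intro e
    have h := congrFun heig e
    rw [Bc_decomp, Matrix.add_mulVec, Matrix.add_mulVec, Matrix.add_mulVec] at h
    simpa using h
  have eq_out : ∀ e : (addNode G S).Dart, e.toProd.1 = none →
      (Fblk G S *ᵥ v) e = t * v e := by
    intro e h1
    have hnew : isNewDart G S e := Or.inl h1
    have h2 : e.toProd.2 ≠ none := fun hc => not_both_none e ⟨h1, hc⟩
    have h := hpt e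
    rw [mulVec_row_zero _ v e (fun f => Ablk_row hnew),
      mulVec_row_zero _ v e (fun f => Dblk_row hnew),
      mulVec_row_zero _ v e (fun f => Eblk_row h2)] at h
    simpa using h
  have eq_in : ∀ e : (addNode G S).Dart, e.toProd.2 = none →
      (Eblk G S *ᵥ v) e = t * v e := by
    intro e h2
    have hnew : isNewDart G S e := Or.inr h2
    have h1 : e.toProd.1 ≠ none := fun hc => not_both_none e ⟨hc, h2⟩
    have h := hpt e
    rw [mulVec_row_zero _ v e (fun f => Ablk_row hnew),
      mulVec_row_zero _ v e (fun f => Dblk_row hnew),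
      mulVec_row_zero _ v e (fun f => Fblk_row h1)] at h
    simpa using h
  have eq_old : ∀ e : (addNode G S).Dart, ¬ isNewDart G S e →
      (Ablk G S *ᵥ v) e + (Dblk G S *ᵥ v) e = t * v e := by
    intro e he
    have h := hpt e
    rw [mulVec_row_zero _ v e (fun f => Eblk_row (old_snd_ne he)),
      mulVec_row_zero _ v e (fun f => Fblk_row (old_fst_ne he))] at h
    simpa using h
  -- vector-level substitutions
  have cE : Eblk G S *ᵥ v = Eblk G S *ᵥ pad G S w := by
    apply mulVec_congr'
    intro e f
    by_cases hf : isNewDart G S f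
    · rw [Eblk_col hf, zero_mul, zero_mul]
    · rw [pad_old w ⟨f, hf⟩]
  have cA : Ablk G S *ᵥ v = Ablk G S *ᵥ pad G S w := by
    apply mulVec_congr'
    intro e f
    by_cases hf : isNewDart G S f
    · rw [Ablk_col hf, zero_mul, zero_mul]
    · rw [pad_old w ⟨f, hf⟩]
  have cF : Fblk G S *ᵥ v = t⁻¹ • (Fblk G S *ᵥ (Eblk G S *ᵥ v)) := by
    rw [← Matrix.mulVec_smul]
    apply mulVec_congr'
    intro e f
    by_cases hf : f.toProd.2 = none
    · congr 1
      have := eq_in f hf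
      rw [Pi.smul_apply, this, smul_eq_mul]
      field_simp
    · rw [Fblk_col hf, zero_mul, zero_mul]
  have cD : Dblk G S *ᵥ v = t⁻¹ • (Dblk G S *ᵥ (Fblk G S *ᵥ v)) := by
    rw [← Matrix.mulVec_smul]
    apply mulVec_congr'
    intro e f
    by_cases hf : f.toProd.1 = none
    · congr 1
      have := eq_out f hf
      rw [Pi.smul_apply, this, smul_eq_mul]
      field_simp
    · rw [Dblk_col hf, zero_mul, zero_mul]
  have cDX : Dblk G S *ᵥ v = (t⁻¹ * t⁻¹) • (Xmat G S *ᵥ pad G S w) := by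
    rw [cD, cF, cE, Matrix.mulVec_smul, ← Xmat_mulVec, smul_smul]
  -- w ≠ 0
  have hw : w ≠ 0 := by
    intro hw0
    apply hv
    have hvo : ∀ e : (addNode G S).Dart, ¬ isNewDart G S e → v e = 0 := by
      intro e he
      exact congrFun hw0 ⟨e, he⟩
    have hpadw : pad G S w = 0 := by
      rw [hw0]
      funext e
      by_cases he : isNewDart G S e
      · exact pad_new 0 he
      · exact pad_old 0 ⟨e, he⟩
    have hEv : Eblk G S *ᵥ v = 0 := by rw [cE, hpadw, Matrix.mulVec_zero]
    have hvin : ∀ e : (addNode G S).Dart, e.toProd.2 = none → v e = 0 := by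
      intro e h2
      have := eq_in e h2
      rw [hEv] at this
      have := (mul_eq_zero.mp this.symm).resolve_left ht
      exact this
    have hFv : Fblk G S *ᵥ v = 0 := by
      rw [show (0 : (addNode G S).Dart → ℂ) = Fblk G S *ᵥ 0 by rw [Matrix.mulVec_zero]]
      apply mulVec_congr'
      intro e f
      by_cases hf : f.toProd.2 = none
      · rw [hvin f hf, Pi.zero_apply]
      · rw [Fblk_col hf, zero_mul, zero_mul]
    have hvout : ∀ e : (addNode G S).Dart, e.toProd.1 = none → v e = 0 := by
      intro e h1
      have := eq_out e h1
      rw [hFv] at this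
      exact (mul_eq_zero.mp this.symm).resolve_left ht
    funext e
    by_cases h1 : e.toProd.1 = none
    · exact hvout e h1
    · by_cases h2 : e.toProd.2 = none
      · exact hvin e h2
      · exact hvo e (fun hc => hc.elim h1 h2)
  refine ⟨w, hw, ?_⟩
  funext e
  have h := eq_old e.1 e.2
  rw [cA, cDX] at h
  rw [Pi.smul_apply, mulVec_pad_A, mulVec_pad_X] at h
  have hwv : v e.1 = w e := rfl
  rw [hwv] at h
  rw [Pi.smul_apply, Matrix.sub_mulVec, Matrix.smul_mulVec, Matrix.one_mulVec]
  rw [Pi.sub_apply, Pi.smul_apply, smul_eq_mul, smul_eq_mul]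
  rw [smul_eq_mul] at h
  field_simp at h
  linear_combination h

/-- Backward direction of the key equivalence. -/
lemma key_backward {t : ℂ} (ht : t ≠ 0) (w : OldDart G S → ℂ) (hw : w ≠ 0)
    (heq : Xsub G S *ᵥ w = (-t ^ 2) • ((Bold G S - t • 1) *ᵥ w)) :
    ∃ v ≠ 0, Bc G S *ᵥ v = t • v := by
  classical
  set u0 : (addNode G S).Dart → ℂ := pad G S w with hu0
  set u1 : (addNode G S).Dart → ℂ := Eblk G S *ᵥ u0 with hu1
  set u2 : (addNode G S).Dart → ℂ := Fblk G S *ᵥ u1 with hu2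
  -- support facts
  have hu0old : ∀ e, isNewDart G S e → u0 e = 0 := fun e he => pad_new w he
  have hu1in : ∀ e : (addNode G S).Dart, e.toProd.2 ≠ none → u1 e = 0 :=
    fun e he => mulVec_row_zero _ u0 e (fun f => Eblk_row he)
  have hu2out : ∀ e : (addNode G S).Dart, e.toProd.1 ≠ none → u2 e = 0 :=
    fun e he => mulVec_row_zero _ u1 e (fun f => Fblk_row he)
  set v : (addNode G S).Dart → ℂ := u0 + t⁻¹ • u1 + (t⁻¹ * t⁻¹) • u2 with hvdef
  have hvold : ∀ e : OldDart G S, v e.1 = w e := by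
    intro e
    have h1 := hu1in e.1 (old_snd_ne e.2)
    have h2 := hu2out e.1 (old_fst_ne e.2)
    simp only [hvdef, Pi.add_apply, Pi.smul_apply, h1, h2, smul_eq_mul, mul_zero, add_zero]
    exact pad_old w e
  have hv : v ≠ 0 := by
    intro hv0
    apply hw
    funext e
    have := congrFun hv0 e.1
    rw [hvold e] at this
    exact this
  refine ⟨v, hv, ?_⟩
  -- compute the products of each block with each component
  have hAu1 : Ablk G S *ᵥ u1 = 0 := by
    funext e
    rw [mulVec_apply']
    apply Finset.sum_eq_zero
    intro f _
    by_cases hf : isNewDart G S f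
    · rw [Ablk_col hf, zero_mul]
    · rw [hu1in f (old_snd_ne hf), mul_zero]
  have hAu2 : Ablk G S *ᵥ u2 = 0 := by
    funext e
    rw [mulVec_apply']
    apply Finset.sum_eq_zero
    intro f _
    by_cases hf : isNewDart G S f
    · rw [Ablk_col hf, zero_mul]
    · rw [hu2out f (old_fst_ne hf), mul_zero]
  have hDu0 : Dblk G S *ᵥ u0 = 0 := by
    funext e
    rw [mulVec_apply']
    apply Finset.sum_eq_zero
    intro f _
    by_cases hf : isNewDart G S f
    · rw [hu0old f hf, mul_zero]
    · rw [Dblk_col (old_fst_ne hf), zero_mul]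
  have hDu1 : Dblk G S *ᵥ u1 = 0 := by
    funext e
    rw [mulVec_apply']
    apply Finset.sum_eq_zero
    intro f _
    by_cases hf : f.toProd.1 = none
    · have : f.toProd.2 ≠ none := fun hc => not_both_none f ⟨hf, hc⟩
      rw [hu1in f this, mul_zero]
    · rw [Dblk_col hf, zero_mul]
  have hEu1 : Eblk G S *ᵥ u1 = 0 := by
    funext e
    rw [mulVec_apply']
    apply Finset.sum_eq_zero
    intro f _
    by_cases hf : isNewDart G S f
    · rw [Eblk_col hf, zero_mul]
    · rw [hu1in f (old_snd_ne hf), mul_zero]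
  have hEu2 : Eblk G S *ᵥ u2 = 0 := by
    funext e
    rw [mulVec_apply']
    apply Finset.sum_eq_zero
    intro f _
    by_cases hf : isNewDart G S f
    · rw [Eblk_col hf, zero_mul]
    · rw [hu2out f (old_fst_ne hf), mul_zero]
  have hFu0 : Fblk G S *ᵥ u0 = 0 := by
    funext e
    rw [mulVec_apply']
    apply Finset.sum_eq_zero
    intro f _
    by_cases hf : isNewDart G S f
    · rw [hu0old f hf, mul_zero]
    · rw [Fblk_col (old_snd_ne hf), zero_mul]
  have hFu2 : Fblk G S *ᵥ u2 = 0 := by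
    funext e
    rw [mulVec_apply']
    apply Finset.sum_eq_zero
    intro f _
    by_cases hf : f.toProd.2 = none
    · have : f.toProd.1 ≠ none := fun hc => not_both_none f ⟨hc, hf⟩
      rw [hu2out f this, mul_zero]
    · rw [Fblk_col hf, zero_mul]
  -- the central identity
  have hcentral : Ablk G S *ᵥ u0 + (t⁻¹ * t⁻¹) • (Xmat G S *ᵥ u0) = t • u0 := by
    funext e
    by_cases he : isNewDart G S e
    · rw [Pi.add_apply, Pi.smul_apply, Pi.smul_apply,
        mulVec_row_zero _ u0 e (fun f => Ablk_row he), hu0old e he,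
        Xmat_mulVec, mulVec_row_zero _ _ e (fun f => Dblk_row he)]
      simp
    · have hpt' : ∀ E : OldDart G S,
          (Xsub G S *ᵥ w) E = (-t ^ 2) • ((Bold G S *ᵥ w) E - t • w E) := by
        intro E
        rw [heq, Pi.smul_apply, Matrix.sub_mulVec, Matrix.smul_mulVec,
          Matrix.one_mulVec, Pi.sub_apply, Pi.smul_apply]
      have hpt := hpt' ⟨e, he⟩
      rw [Pi.add_apply, Pi.smul_apply, Pi.smul_apply]
      rw [mulVec_pad_A w ⟨e, he⟩, mulVec_pad_X w ⟨e, he⟩]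
      have hue : u0 e = w ⟨e, he⟩ := pad_old w ⟨e, he⟩
      rw [hue]
      rw [smul_eq_mul, smul_eq_mul] at hpt
      simp only [smul_eq_mul]
      field_simp
      linear_combination hpt
  -- put everything together
  rw [Bc_decomp]
  rw [Matrix.add_mulVec, Matrix.add_mulVec, Matrix.add_mulVec]
  have expand : ∀ M : Matrix (addNode G S).Dart (addNode G S).Dart ℂ,
      M *ᵥ v = M *ᵥ u0 + t⁻¹ • (M *ᵥ u1) + (t⁻¹ * t⁻¹) • (M *ᵥ u2) := by
    intro M
    rw [hvdef, Matrix.mulVec_add, Matrix.mulVec_add, Matrix.mulVec_smul, Matrix.mulVec_smul]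
  rw [expand (Ablk G S), expand (Dblk G S), expand (Eblk G S), expand (Fblk G S)]
  rw [hAu1, hAu2, hDu0, hDu1, hEu1, hEu2, hFu0, hFu2]
  rw [← hu1, ← hu2]
  have hXu : Dblk G S *ᵥ u2 = Xmat G S *ᵥ u0 := by
    rw [Xmat_mulVec, hu2, hu1]
  rw [hXu]
  have : t • v = t • u0 + u1 + t⁻¹ • u2 := by
    funext x
    simp only [hvdef, Pi.add_apply, Pi.smul_apply, smul_eq_mul]
    field_simp
  rw [this, ← hcentral]
  module

end Aux

/-- a nonzero `t` that is not an eigenvalue of `B` is an eigenvalue of `B^c`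
iff `−t²` is an eigenvalue of `Y(t) X`, where `Y(t) = (B − tI)⁻¹`. -/
theorem new_eigenvalue_iff (G : SimpleGraph V) [DecidableRel G.Adj] (S : Finset V)
    (hS : S.Nonempty) (t : ℂ) (ht : t ≠ 0) (htB : t ∉ spectrum ℂ (Bold G S)) :
    t ∈ spectrum ℂ (Bc G S) ↔
      (-t ^ 2) ∈ spectrum ℂ
        ((Bold G S - t • (1 : Matrix (OldDart G S) (OldDart G S) ℂ))⁻¹ * Xsub G S) := by
  classical
  rw [spec_iff_exists, spec_iff_exists]
  -- invertibility of Bold - t I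
  have hunit : IsUnit (Bold G S - t • 1) := by
    have h := spectrum.notMem_iff.mp htB
    have halg : (algebraMap ℂ (Matrix (OldDart G S) (OldDart G S) ℂ)) t
        = t • (1 : Matrix (OldDart G S) (OldDart G S) ℂ) :=
      Algebra.algebraMap_eq_smul_one t
    rw [halg] at h
    rw [show Bold G S - t • 1 = -(t • 1 - Bold G S) by rw [neg_sub]]
    exact h.neg
  have hdet : IsUnit (Bold G S - t • 1).det := (Matrix.isUnit_iff_isUnit_det _).mp hunit
  have hMi : (Bold G S - t • 1) * (Bold G S - t • 1)⁻¹ = 1 := Matrix.mul_nonsing_inv _ hdet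
  have hiM : (Bold G S - t • 1)⁻¹ * (Bold G S - t • 1) = 1 := Matrix.nonsing_inv_mul _ hdet
  constructor
  · rintro ⟨v, hv, heig⟩
    obtain ⟨w, hw, hkey⟩ := key_forward ht v hv heig
    refine ⟨w, hw, ?_⟩
    rw [← Matrix.mulVec_mulVec, hkey, Matrix.mulVec_smul, Matrix.mulVec_mulVec, hiM,
      Matrix.one_mulVec]
  · rintro ⟨w, hw, hkey⟩
    have hkey' : Xsub G S *ᵥ w = (-t ^ 2) • ((Bold G S - t • 1) *ᵥ w) := by
      have h1 : (Bold G S - t • 1) *ᵥ (((Bold G S - t • 1)⁻¹ * Xsub G S) *ᵥ w)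
          = Xsub G S *ᵥ w := by
        rw [Matrix.mulVec_mulVec, ← Matrix.mul_assoc, hMi, Matrix.one_mul]
      rw [← h1, hkey, Matrix.mulVec_smul]
    exact key_backward ht w hw hkey'
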